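/- arXiv:1708.07610 — 4 statements merged into one kernel-verified Lean document; each statement's English description precedes it below -/
import Mathlib

section
/- Let k be a field of characteristic 0 and work in the polynomial ring k[t, x, y, z]. Then (y, z) ∩ (x, z) ∩ (x + y, z) ∩ ((x, y, z)^3 + (z^2)) = (x^2y + xy^2, xyz, x^2z, y^2z, z^2) as ideals of k[t, x, y, z]. (The left-hand side is the ideal of the (2,3)-cone configuration: three concurrent lines in the plane z = 0 through the point P = [1:0:0:0] together with the (2,3)-point with ideal (I_P)^3 + (I_H)^2, H the plane z = 0; so the limit scheme X_0 of the family X_λ equals this (2,3)-cone configuration.) -/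
/-!
Write `f = f₀ + z f₁ + z² f₂` with `f₀, f₁` free of `z`: `f₀` is `f` at `z = 0` and `f₁` is
`∂f/∂z` at `z = 0`. Membership of `f` in the three line ideals makes `f₀` divisible by the
pairwise non-associated primes `x`, `y`, `x + y`, hence by `xy(x + y)`. Since `∂/∂z` maps
`(x, y, z)³` into `(x, y, z)²` and `(z²)` into `(z)`, membership in `(x, y, z)³ + (z²)` forces
`f₁ ∈ (x, y)²`. So `f ∈ (xy(x + y)) + z (x, y)² + (z²)`, which is the right-hand side.
-/

open MvPolynomial

theorem Derivation.map_mem_pow_of_mem_pow_succ {R A : Type*} [CommRing R] [CommRing A]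
    [Algebra R A] (D : Derivation R A A) {J : Ideal A} :
    ∀ {n : ℕ} {a : A}, a ∈ J ^ (n + 1) → D a ∈ J ^ n
  | 0, _, _ => by simp
  | n + 1, a, ha => by
    rw [pow_succ] at ha
    refine Submodule.mul_induction_on ha (fun b hb c hc => ?_) (fun b c hb hc => ?_)
    · rw [D.leibniz, smul_eq_mul, smul_eq_mul]
      refine add_mem (Ideal.mul_mem_right _ _ hb) ?_
      rw [pow_succ']
      exact Ideal.mul_mem_mul hc (map_mem_pow_of_mem_pow_succ D hb)
    · rw [map_add]; exact add_mem hb hc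

theorem Prime.mul_dvd_of_dvd_of_not_dvd {α : Type*} [CommMonoidWithZero α] {p q a : α}
    (hp : Prime p) (hpq : ¬p ∣ q) (hpa : p ∣ a) (hqa : q ∣ a) : q * p ∣ a := by
  obtain ⟨c, rfl⟩ := hqa
  obtain ⟨d, rfl⟩ := (hp.dvd_or_dvd hpa).resolve_left hpq
  exact ⟨d, (mul_assoc _ _ _).symm⟩

namespace MvPolynomial

section Prime

variable {σ R : Type*} [CommRing R] [IsDomain R] [UniqueFactorizationMonoid R]

theorem prime_X_add_X {i j : σ} (hij : i ≠ j) : Prime (X i + X j : MvPolynomial σ R) := by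
  classical
  have hcoeff : (X i + X j : MvPolynomial σ R).coeff (Finsupp.single i 1) = 1 := by
    simp [coeff_X, Finsupp.single_left_inj, hij.symm]
  refine (irreducible_of_totalDegree_eq_one ?_ ?_).prime
  · apply le_antisymm
    · exact (totalDegree_add _ _).trans (by simp)
    · simpa using le_totalDegree (s := Finsupp.single i 1) (by simp [mem_support_iff, hcoeff])
  · intro r hr
    exact isUnit_of_dvd_one (hcoeff ▸ hr _)

end Prime

theorem not_dvd_of_eval_eq_zero {σ R : Type*} [CommSemiring R] {p q : MvPolynomial σ R}
    (c : σ → R) (hp : eval c p = 0) (hq : eval c q ≠ 0) : ¬p ∣ q :=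
  fun h => hq (zero_dvd_iff.1 (hp ▸ map_dvd (eval c) h))

section SetVarZero

variable {σ R : Type*} [CommRing R] [DecidableEq σ] (i : σ)

noncomputable def setVarZero : MvPolynomial σ R →ₐ[R] MvPolynomial σ R :=
  aeval (Function.update X i 0)

@[simp]
theorem setVarZero_X_self : setVarZero i (X i : MvPolynomial σ R) = 0 := by
  simp [setVarZero]

@[simp]
theorem setVarZero_X_of_ne {j : σ} (hj : j ≠ i) :
    setVarZero i (X j : MvPolynomial σ R) = X j := by
  simp [setVarZero, hj]

theorem setVarZero_X_mul (p : MvPolynomial σ R) : setVarZero i (X i * p) = 0 := by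
  simp

theorem X_dvd_sub_setVarZero (p : MvPolynomial σ R) : X i ∣ p - setVarZero i p := by
  induction p using MvPolynomial.induction_on with
  | C a => simp [setVarZero]
  | add p q hp hq => simpa [add_sub_add_comm] using dvd_add hp hq
  | mul_X p j hp =>
    by_cases hj : j = i
    · subst hj; simp
    · simpa [hj, ← sub_mul] using dvd_mul_of_dvd_left hp (X j)

theorem setVarZero_pderiv_X_mul (p : MvPolynomial σ R) :
    setVarZero i (pderiv i (X i * p)) = setVarZero i p := by
  simp

theorem setVarZero_dvd_of_mem_span_pair {a p : MvPolynomial σ R}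
    (hp : p ∈ Ideal.span {a, X i}) : setVarZero i a ∣ setVarZero i p := by
  obtain ⟨u, v, rfl⟩ := Ideal.mem_span_pair.1 hp
  simp

/-- Differentiating in `X i` and then setting `X i = 0` extracts the coefficient of `X i`. -/
theorem setVarZero_mem_map_pow_of_X_mul_mem {J : Ideal (MvPolynomial σ R)} {n : ℕ}
    {w : MvPolynomial σ R} (hw : X i * w ∈ J ^ (n + 1) + Ideal.span {X i ^ 2}) :
    setVarZero i w ∈ J.map (setVarZero i) ^ n := by
  obtain ⟨a, ha, b, hb, hab⟩ := Submodule.mem_sup.1 hw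
  obtain ⟨c, rfl⟩ := Ideal.mem_span_singleton'.1 hb
  have key := congrArg (fun q => setVarZero i (pderiv i q)) hab
  simp only [map_add, sq, mul_comm c, mul_assoc, setVarZero_pderiv_X_mul, setVarZero_X_mul,
    add_zero] at key
  rw [← key, ← Ideal.map_pow]
  exact Ideal.mem_map_of_mem _ ((pderiv i).map_mem_pow_of_mem_pow_succ ha)

end SetVarZero

end MvPolynomial

theorem Ideal.span_pair_le_span_pair_of_dvd {R : Type*} [CommSemiring R] {a b c : R}
    (h : b ∣ a) : Ideal.span {a, c} ≤ Ideal.span {b, c} := by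
  simp only [Ideal.span_insert]
  exact sup_le_sup_right (Ideal.span_singleton_le_span_singleton.2 h) _

theorem Ideal.mul_mul_mem_pow_three {R : Type*} [CommSemiring R] {I : Ideal R} {a b c : R}
    (ha : a ∈ I) (hb : b ∈ I) (hc : c ∈ I) : a * b * c ∈ I ^ 3 := by
  rw [pow_three']
  exact Ideal.mul_mem_mul (Ideal.mul_mem_mul ha hb) hc

section ConeConfiguration

variable {k : Type*} [Field k]

theorem X_two_mul_X_one_mul_X_add_X_dvd {g : MvPolynomial (Fin 4) k} (hx : X 1 ∣ g)
    (hy : X 2 ∣ g) (hxy : X 1 + X 2 ∣ g) : X 2 * X 1 * (X 1 + X 2) ∣ g := by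
  refine (prime_X_add_X (by decide)).mul_dvd_of_dvd_of_not_dvd ?_ hxy
    ((X_prime (i := 1)).mul_dvd_of_dvd_of_not_dvd ?_ hx hy)
  · exact not_dvd_of_eval_eq_zero ![0, 1, -1, 0] (by simp) (by simp)
  · exact not_dvd_of_eval_eq_zero ![0, 0, 1, 0] (by simp) (by simp)

theorem cubic_mem_span_pow_three :
    (X 1 ^ 2 * X 2 + X 1 * X 2 ^ 2 : MvPolynomial (Fin 4) k) ∈
      Ideal.span {X 1, X 2, X 3} ^ 3 := by
  have hx : (X 1 : MvPolynomial (Fin 4) k) ∈ Ideal.span {X 1, X 2, X 3} :=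
    Ideal.subset_span (by simp)
  have hy : (X 2 : MvPolynomial (Fin 4) k) ∈ Ideal.span {X 1, X 2, X 3} :=
    Ideal.subset_span (by simp)
  rw [show (X 1 ^ 2 * X 2 + X 1 * X 2 ^ 2 : MvPolynomial (Fin 4) k) =
    X 1 * X 1 * X 2 + X 1 * X 2 * X 2 by ring]
  exact add_mem (Ideal.mul_mul_mem_pow_three hx hx hy) (Ideal.mul_mul_mem_pow_three hx hy hy)

theorem map_setVarZero_span_X :
    (Ideal.span {X 1, X 2, X 3} : Ideal (MvPolynomial (Fin 4) k)).map (setVarZero 3) =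
      Ideal.span {X 1, X 2} := by
  simp only [Ideal.map_span, Set.image_insert_eq, Set.image_singleton]
  simp only [ne_eq, Fin.reduceEq, not_false_eq_true, setVarZero_X_of_ne, setVarZero_X_self]
  rw [Set.pair_comm _ 0, Set.insert_comm, Ideal.span_insert_zero]

theorem X_mul_mem_of_mem_span_sq {p : MvPolynomial (Fin 4) k}
    (hp : p ∈ Ideal.span {X 1, X 2} ^ 2) :
    X 3 * p ∈ Ideal.span {X 1 ^ 2 * X 2 + X 1 * X 2 ^ 2, X 1 * X 2 * X 3, X 1 ^ 2 * X 3,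
      X 2 ^ 2 * X 3, X 3 ^ 2} := by
  rw [sq] at hp
  refine Submodule.mul_induction_on hp (fun a ha b hb => ?_) (fun a b ha hb => ?_)
  · obtain ⟨a₁, a₂, rfl⟩ := Ideal.mem_span_pair.1 ha
    obtain ⟨b₁, b₂, rfl⟩ := Ideal.mem_span_pair.1 hb
    rw [show X 3 * ((a₁ * X 1 + a₂ * X 2) * (b₁ * X 1 + b₂ * X 2)) =
      a₁ * b₁ * (X 1 ^ 2 * X 3) + (a₁ * b₂ + a₂ * b₁) * (X 1 * X 2 * X 3) +
        a₂ * b₂ * (X 2 ^ 2 * X 3) by ring]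
    refine add_mem (add_mem ?_ ?_) ?_ <;>
      exact Ideal.mul_mem_left _ _ (Ideal.subset_span (by simp))
  · rw [mul_add]
    exact add_mem ha hb

theorem span_cone_generators_le_inf :
    Ideal.span {X 1 ^ 2 * X 2 + X 1 * X 2 ^ 2, X 1 * X 2 * X 3, X 1 ^ 2 * X 3, X 2 ^ 2 * X 3,
      (X 3 : MvPolynomial (Fin 4) k) ^ 2} ≤
    Ideal.span {X 2, X 3} ⊓ Ideal.span {X 1, X 3} ⊓ Ideal.span {X 1 + X 2, X 3} ⊓
      (Ideal.span {X 1, X 2, X 3} ^ 3 + Ideal.span {X 3 ^ 2}) := by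
  have hcone : Ideal.span {X 1 ^ 2 * X 2 + X 1 * X 2 ^ 2, X 1 * X 2 * X 3, X 1 ^ 2 * X 3,
      X 2 ^ 2 * X 3, (X 3 : MvPolynomial (Fin 4) k) ^ 2} ≤
      Ideal.span {X 1 ^ 2 * X 2 + X 1 * X 2 ^ 2, X 3} := by
    simp only [Ideal.span_le, Set.insert_subset_iff, Set.singleton_subset_iff, SetLike.mem_coe]
    refine ⟨Ideal.subset_span (by simp), ?_, ?_, ?_, ?_⟩ <;>
      exact Ideal.mul_mem_left _ _ (Ideal.subset_span (by simp))
  have hx : (X 1 : MvPolynomial (Fin 4) k) ∈ Ideal.span {X 1, X 2, X 3} :=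
    Ideal.subset_span (by simp)
  have hy : (X 2 : MvPolynomial (Fin 4) k) ∈ Ideal.span {X 1, X 2, X 3} :=
    Ideal.subset_span (by simp)
  have hz : (X 3 : MvPolynomial (Fin 4) k) ∈ Ideal.span {X 1, X 2, X 3} :=
    Ideal.subset_span (by simp)
  refine le_inf (le_inf (le_inf ?_ ?_) ?_) ?_
  · exact hcone.trans (Ideal.span_pair_le_span_pair_of_dvd ⟨X 1 ^ 2 + X 1 * X 2, by ring⟩)
  · exact hcone.trans (Ideal.span_pair_le_span_pair_of_dvd ⟨X 1 * X 2 + X 2 ^ 2, by ring⟩)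
  · exact hcone.trans (Ideal.span_pair_le_span_pair_of_dvd ⟨X 1 * X 2, by ring⟩)
  · simp only [Ideal.span_le, Set.insert_subset_iff, Set.singleton_subset_iff, SetLike.mem_coe, sq]
    refine ⟨Submodule.mem_sup_left ?_,
      Submodule.mem_sup_left (Ideal.mul_mul_mem_pow_three hx hy hz),
      Submodule.mem_sup_left (Ideal.mul_mul_mem_pow_three hx hx hz),
      Submodule.mem_sup_left (Ideal.mul_mul_mem_pow_three hy hy hz),
      Submodule.mem_sup_right (Ideal.mem_span_singleton_self _)⟩
    simpa only [sq] using cubic_mem_span_pow_three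

theorem mem_span_cone_generators_of_mem_inf {f : MvPolynomial (Fin 4) k}
    (hf : f ∈ Ideal.span {X 2, X 3} ⊓ Ideal.span {X 1, X 3} ⊓ Ideal.span {X 1 + X 2, X 3} ⊓
      (Ideal.span {X 1, X 2, X 3} ^ 3 + Ideal.span {X 3 ^ 2})) :
    f ∈ Ideal.span {X 1 ^ 2 * X 2 + X 1 * X 2 ^ 2, X 1 * X 2 * X 3, X 1 ^ 2 * X 3,
      X 2 ^ 2 * X 3, X 3 ^ 2} := by
  obtain ⟨⟨⟨hf₁, hf₂⟩, hf₃⟩, hf₄⟩ := hf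
  obtain ⟨c, hc⟩ : X 2 * X 1 * (X 1 + X 2) ∣ setVarZero 3 f :=
    X_two_mul_X_one_mul_X_add_X_dvd (by simpa using setVarZero_dvd_of_mem_span_pair 3 hf₂)
      (by simpa using setVarZero_dvd_of_mem_span_pair 3 hf₁)
      (by simpa using setVarZero_dvd_of_mem_span_pair 3 hf₃)
  replace hc : setVarZero 3 f = c * (X 1 ^ 2 * X 2 + X 1 * X 2 ^ 2) := by rw [hc]; ring
  obtain ⟨w, hw⟩ := X_dvd_sub_setVarZero 3 f
  obtain ⟨v, hv⟩ := X_dvd_sub_setVarZero 3 w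
  have hw₀ : setVarZero 3 w ∈ Ideal.span {X 1, X 2} ^ 2 := by
    rw [← map_setVarZero_span_X]
    refine setVarZero_mem_map_pow_of_X_mul_mem 3 ?_
    rw [← hw, hc]
    exact sub_mem hf₄ (Submodule.mem_sup_left (Ideal.mul_mem_left _ _ cubic_mem_span_pow_three))
  rw [show f = c * (X 1 ^ 2 * X 2 + X 1 * X 2 ^ 2) + X 3 * setVarZero 3 w + v * X 3 ^ 2 by
    linear_combination hw + X 3 * hv + hc]
  exact add_mem (add_mem (Ideal.mul_mem_left _ _ (Ideal.subset_span (by simp)))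
    (X_mul_mem_of_mem_span_sq hw₀)) (Ideal.mul_mem_left _ _ (Ideal.subset_span (by simp)))

end ConeConfiguration

theorem ideal_of_two_three_cone_configuration_general (k : Type*) [Field k] :
    let x : MvPolynomial (Fin 4) k := X 1
    let y : MvPolynomial (Fin 4) k := X 2
    let z : MvPolynomial (Fin 4) k := X 3
    Ideal.span {y, z} ⊓ Ideal.span {x, z} ⊓ Ideal.span {x + y, z} ⊓
        ((Ideal.span {x, y, z}) ^ 3 + Ideal.span {z ^ 2}) =
      Ideal.span {x ^ 2 * y + x * y ^ 2, x * y * z, x ^ 2 * z, y ^ 2 * z, z ^ 2} :=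
  le_antisymm (fun _ => mem_span_cone_generators_of_mem_inf) span_cone_generators_le_inf

/-- In `k[t,x,y,z]` with `char k = 0`: the ideal of the `(2,3)`-cone configuration (three
concurrent lines in the plane `z = 0` through `P = [1:0:0:0]` together with the
`(2,3)`-point with ideal `(I_P)³ + (I_H)²`) equals `(x²y + xy², xyz, x²z, y²z, z²)`. -/
theorem ideal_of_two_three_cone_configuration (k : Type*) [Field k] [CharZero k] :
    let x : MvPolynomial (Fin 4) k := X 1
    let y : MvPolynomial (Fin 4) k := X 2
    let z : MvPolynomial (Fin 4) k := X 3
    Ideal.span {y, z} ⊓ Ideal.span {x, z} ⊓ Ideal.span {x + y, z} ⊓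
        ((Ideal.span {x, y, z}) ^ 3 + Ideal.span {z ^ 2}) =
      Ideal.span {x ^ 2 * y + x * y ^ 2, x * y * z, x ^ 2 * z, y ^ 2 * z, z ^ 2} :=
  ideal_of_two_three_cone_configuration_general k
end

section
/- Let k be a field of characteristic 0 and work in the polynomial ring k[t, x, y, z]. Then the ideal quotient (x^2y + xy^2, xyz, x^2z, y^2z, z^2) : (z) equals (x^2, xy, y^2, z). (Geometrically: the residual of the (2,3)-cone configuration X_0 with respect to the plane H = {z = 0} is the scheme 2P|_H, the first infinitesimal neighborhood of P = [1:0:0:0] in H, with ideal (x, y, z)^2 + (z).) -/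
/-!
The ideal is `(g) + z·J` with `g = x²y + xy²` and `J = (x², xy, y², z)`. Since `z` is prime and
does not divide `g`, residuating along `z` gives `(g) + J`, which is `J` because
`g = (x + y)·xy ∈ J`.
-/

open MvPolynomial

theorem Ideal.colon_span_singleton_sup_span_singleton_mul {R : Type*} [CommRing R] [IsDomain R]
    {g z : R} (J : Ideal R) (hz : Prime z) (hg : ¬z ∣ g) :
    (span {g} ⊔ span {z} * J).colon (span {z}) = span {g} ⊔ J := by
  ext f
  simp only [Submodule.mem_colon_span_singleton, smul_eq_mul, Submodule.mem_sup,
    mem_span_singleton', mem_span_singleton_mul, exists_exists_eq_and, exists_exists_and_eq_and]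
  constructor
  · rintro ⟨a, j, hj, hfz⟩
    obtain ⟨a', rfl⟩ : z ∣ a :=
      (hz.dvd_or_dvd ⟨f - j, by linear_combination hfz⟩).resolve_right hg
    exact ⟨a', j, hj, mul_right_cancel₀ hz.ne_zero (by linear_combination hfz)⟩
  · rintro ⟨a, j, hj, rfl⟩
    exact ⟨a * z, j, hj, by ring⟩

theorem residual_of_two_three_cone_configuration_general (k : Type*) [Field k] :
    let x : MvPolynomial (Fin 4) k := X 1
    let y : MvPolynomial (Fin 4) k := X 2
    let z : MvPolynomial (Fin 4) k := X 3
    Submodule.colon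
        (Ideal.span {x ^ 2 * y + x * y ^ 2, x * y * z, x ^ 2 * z, y ^ 2 * z, z ^ 2})
        (Ideal.span {z}) =
      Ideal.span {x ^ 2, x * y, y ^ 2, z} := by
  intro x y z
  have hI : Ideal.span {x ^ 2 * y + x * y ^ 2, x * y * z, x ^ 2 * z, y ^ 2 * z, z ^ 2} =
      Ideal.span {x ^ 2 * y + x * y ^ 2} ⊔
        Ideal.span {z} * Ideal.span {x ^ 2, x * y, y ^ 2, z} := by
    rw [Ideal.span_insert, Ideal.span_mul_span', Set.singleton_mul]
    simp only [Set.image_insert_eq, Set.image_singleton, mul_comm z, ← sq,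
      Set.insert_comm (x ^ 2 * z)]
  -- specialising `(x, y, z) ↦ (T, 1, 0)` in `k[T]` would send `z * r` to `0` and `g` to `T² + T`
  have hz : ¬z ∣ x ^ 2 * y + x * y ^ 2 := fun ⟨r, hr⟩ => by
    simpa [x, y, z] using
      congrArg (fun p => (aeval (![0, Polynomial.X, 1, 0] : Fin 4 → Polynomial k) p).coeff 1) hr
  have hg : x ^ 2 * y + x * y ^ 2 ∈ Ideal.span {x ^ 2, x * y, y ^ 2, z} := by
    rw [show x ^ 2 * y + x * y ^ 2 = (x + y) * (x * y) by ring]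
    exact Ideal.mul_mem_left _ _ (Ideal.subset_span (by simp))
  rw [hI, Ideal.colon_span_singleton_sup_span_singleton_mul _ X_prime hz,
    sup_eq_right.2 ((Ideal.span_singleton_le_iff_mem _).2 hg)]

/-- In `k[t,x,y,z]` with `char k = 0`: the ideal quotient
`(x²y + xy², xyz, x²z, y²z, z²) : (z)` equals `(x², xy, y², z)`, i.e. the residual of the
`(2,3)`-cone configuration with respect to the plane `H = {z = 0}` is the first
infinitesimal neighborhood `2P|_H` of `P = [1:0:0:0]` in `H`. -/
theorem residual_of_two_three_cone_configuration (k : Type*) [Field k] [CharZero k] :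
    let x : MvPolynomial (Fin 4) k := X 1
    let y : MvPolynomial (Fin 4) k := X 2
    let z : MvPolynomial (Fin 4) k := X 3
    Submodule.colon
        (Ideal.span {x ^ 2 * y + x * y ^ 2, x * y * z, x ^ 2 * z, y ^ 2 * z, z ^ 2})
        (Ideal.span {z}) =
      Ideal.span {x ^ 2, x * y, y ^ 2, z} :=
  residual_of_two_three_cone_configuration_general k
end

section
/- Let k be a field of characteristic 0, let s ≥ 3 be an integer, and let λ ∈ k with λ ≠ 0. In k[t, x, y, z], set J_λ = (x, z) ∩ (y, z) ∩ (x + y, z) ∩ (x + 2y, z) ∩ … ∩ (x + (s−3)y, z) ∩ ((x, y, z)^{s−1} + (z^2)) ∩ (x − y − λt, z) ∩ (x, x − y − λt, z)^2 ∩ (y, x − y − λt, z)^2 ∩ (x + y, x − y − λt, z)^2 ∩ … ∩ (x + (s−3)y, x − y − λt, z)^2 (where the factors involving x + iy range over i = 1, …, s−3, an empty list when s = 3). Then J_λ + (z) = (x · y · (x + y) · (x + 2y) ⋯ (x + (s−3)y) · (x − y − λt)) + (z) as ideals of k[t, x, y, z]. (This computes the trace on the plane z = 0 of the scheme X_λ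 consisting of a (2,s−1)-cone configuration plus the line x − y − λt = z = 0 with double points at its s−1 intersections with the cone lines.) -/
/-!
Setting `z = 0` is a ring endomorphism `φ` of `k[t,x,y,z]` with `f - φ f ∈ (z)`, and
`φ z = 0` turns a membership `f ∈ (g, z)` into `g ∣ φ f`. The components `(g, z)` of `J_λ`
give this for the `s` linear forms `g = x, y, x + iy, x - y - λt`; these are irreducible and
pairwise relatively prime, so their product `P` divides `φ f`, i.e. `f ∈ (P) + (z)`.
Conversely `P` visibly lies in every component of `J_λ`.
-/

open MvPolynomial

namespace MvPolynomial

variable {σ R : Type*} [CommRing R]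

theorem irreducible_X_add [IsDomain R] {i : σ} {g : MvPolynomial σ R} (hg : i ∉ g.vars) :
    Irreducible (X i + g) := by
  simpa using irreducible_mul_X_add 1 g i one_ne_zero (by simp) hg isRelPrime_one_left

theorem irreducible_X_add_C_mul_X_add_C_mul_X [IsDomain R] {i j n : σ} (hj : i ≠ j) (hn : i ≠ n)
    (a b : R) : Irreducible (X i + C a * X j + C b * X n) := by
  classical
  rw [add_assoc]
  refine irreducible_X_add fun h => ?_
  have hC : ∀ (c : R) (m : σ), (C c * X m).vars ⊆ {m} := fun c m =>
    (vars_mul _ _).trans (by simp [vars_C, vars_X])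
  rcases Finset.mem_union.mp (vars_add_subset _ _ h) with h | h
  · exact hj (Finset.mem_singleton.mp (hC a j h))
  · exact hn (Finset.mem_singleton.mp (hC b n h))

theorem isRelPrime_of_eval_eq_zero {p q : MvPolynomial σ R} (hp : Irreducible p) (v : σ → R)
    (hpv : eval v p = 0) (hqv : eval v q ≠ 0) : IsRelPrime p q :=
  hp.isRelPrime_iff_not_dvd.mpr fun h => hqv (zero_dvd_iff.mp (hpv ▸ map_dvd (eval v) h))

theorem sub_aeval_update_X_zero_mem_span [DecidableEq σ] (i : σ) (f : MvPolynomial σ R) :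
    f - aeval (Function.update X i 0) f ∈ Ideal.span {X i} := by
  rw [← Ideal.Quotient.eq]
  suffices (Ideal.Quotient.mkₐ R (Ideal.span {(X i : MvPolynomial σ R)})).comp
      (aeval (Function.update X i 0)) = Ideal.Quotient.mkₐ R _ from
    (DFunLike.congr_fun this f).symm
  refine algHom_ext fun j => ?_
  rcases eq_or_ne j i with rfl | hj
  · simp
  · simp [hj]

end MvPolynomial

theorem map_dvd_map_of_mem_span_pair {R S : Type*} [CommSemiring R] [CommSemiring S]
    (φ : R →+* S) {g z f : R} (hz : φ z = 0) (hf : f ∈ Ideal.span {g, z}) : φ g ∣ φ f := by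
  obtain ⟨a, b, rfl⟩ := Ideal.mem_span_pair.mp hf
  exact ⟨φ a, by simp [hz, mul_comm]⟩

theorem Ideal.add_span_singleton_eq_of_dvd_map {R : Type*} [CommRing R] {J : Ideal R} {P z : R}
    (φ : R →+* R) (hφ : ∀ f, f - φ f ∈ span {z}) (hP : P ∈ J) (hJ : ∀ f ∈ J, P ∣ φ f) :
    J + span {z} = span {P} + span {z} := by
  refine le_antisymm (sup_le (fun f hf => ?_) le_sup_right)
    (sup_le_sup_right ((span_singleton_le_iff_mem J).mpr hP) _)
  rw [← add_sub_cancel (φ f) f]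
  exact Submodule.add_mem_sup (mem_span_singleton.mpr (hJ f hf)) (hφ f)

theorem Ideal.prod_mem_pow_card {R ι : Type*} [CommSemiring R] {I : Ideal R} {S : Finset ι}
    {f : ι → R} (h : ∀ i ∈ S, f i ∈ I) : ∏ i ∈ S, f i ∈ I ^ S.card := by
  simpa using Ideal.prod_mem_prod (I := fun _ => I) h

theorem Ideal.mem_span_pair_of_dvd {R : Type*} [CommSemiring R] {a b P : R} (h : a ∣ P) :
    P ∈ span {a, b} :=
  mem_of_dvd _ h (subset_span (by simp))

theorem Ideal.mem_sq_span_triple_of_mul_dvd {R : Type*} [CommSemiring R] {a b c P : R}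
    (h : a * b ∣ P) : P ∈ span {a, b, c} ^ 2 :=
  mem_of_dvd _ h (by
    rw [sq]; exact mul_mem_mul (subset_span (by simp)) (subset_span (by simp)))

theorem mul_mul_prod_mem_span_pow {R : Type*} [CommSemiring R] (x y z : R) (m : ℕ) :
    x * y * ∏ i ∈ Finset.Icc 1 m, (x + i • y) ∈ Ideal.span {x, y, z} ^ (m + 2) := by
  have hx : x ∈ Ideal.span {x, y, z} := Ideal.subset_span (by simp)
  have hy : y ∈ Ideal.span {x, y, z} := Ideal.subset_span (by simp)
  rw [mul_comm, pow_add, sq]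
  refine Ideal.mul_mem_mul ?_ (Ideal.mul_mem_mul hx hy)
  simpa using Ideal.prod_mem_pow_card fun i (_ : i ∈ Finset.Icc 1 m) =>
    Ideal.add_mem _ hx (nsmul_mem hy i)

section PlaneLines

variable {k : Type*} [Field k]

theorem irreducible_X_one_add_nsmul_X_two (i : ℕ) :
    Irreducible (X 1 + i • X 2 : MvPolynomial (Fin 4) k) := by
  simpa [nsmul_eq_mul] using irreducible_X_add_C_mul_X_add_C_mul_X (R := k)
    (i := (1 : Fin 4)) (j := 2) (n := 0) (by decide) (by decide) (i : k) 0

theorem irreducible_X_one_sub_X_two_sub_C_mul_X_zero (l : k) :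
    Irreducible (X 1 - X 2 - C l * X 0 : MvPolynomial (Fin 4) k) := by
  have h := irreducible_X_add_C_mul_X_add_C_mul_X (R := k)
    (i := (1 : Fin 4)) (j := 2) (n := 0) (by decide) (by decide) (-1) (-l)
  have e : X 1 + C (-1) * X 2 + C (-l) * X 0 =
      (X 1 - X 2 - C l * X 0 : MvPolynomial (Fin 4) k) := by
    simp only [map_neg, map_one]; ring
  exact e ▸ h

theorem prod_lines_dvd [CharZero k] (l : k) (m : ℕ) {f : MvPolynomial (Fin 4) k}
    (hx : X 1 ∣ f) (hy : X 2 ∣ f) (hcone : ∀ i ∈ Finset.Icc 1 m, X 1 + i • X 2 ∣ f)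
    (hL : X 1 - X 2 - C l * X 0 ∣ f) :
    X 1 * X 2 * (∏ i ∈ Finset.Icc 1 m, (X 1 + i • X 2)) * (X 1 - X 2 - C l * X 0) ∣ f := by
  -- each pair is separated by a point on the zero set of the first form off the second
  have hxy : IsRelPrime (X 1 : MvPolynomial (Fin 4) k) (X 2) :=
    isRelPrime_of_eval_eq_zero X_prime.irreducible ![0, 0, 1, 0] (by simp) (by simp)
  have hcone_xy : ∀ i ∈ Finset.Icc 1 m,
      IsRelPrime (X 1 + i • X 2 : MvPolynomial (Fin 4) k) (X 1 * X 2) := fun i hi =>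
    isRelPrime_of_eval_eq_zero (irreducible_X_one_add_nsmul_X_two i) ![0, -(i : k), 1, 0]
      (by simp) (by simpa using Nat.one_le_iff_ne_zero.mp (Finset.mem_Icc.mp hi).1)
  have hcone_pairwise : (Finset.Icc 1 m : Set ℕ).Pairwise
      (Function.onFun IsRelPrime fun i => (X 1 + i • X 2 : MvPolynomial (Fin 4) k)) :=
    fun i _ j _ hij =>
    isRelPrime_of_eval_eq_zero (irreducible_X_one_add_nsmul_X_two i) ![0, -(i : k), 1, 0]
      (by simp) (by simpa [neg_add_eq_zero, eq_comm] using hij)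
  have hL_rest : IsRelPrime (X 1 - X 2 - C l * X 0)
      (X 1 * X 2 * ∏ i ∈ Finset.Icc 1 m, (X 1 + i • X 2 : MvPolynomial (Fin 4) k)) :=
    isRelPrime_of_eval_eq_zero (irreducible_X_one_sub_X_two_sub_C_mul_X_zero l) ![0, 1, 1, 0]
      (by simp) (by simpa [Finset.prod_ne_zero_iff, add_comm] using
        fun a (_ : 1 ≤ a) (_ : a ≤ m) => Nat.cast_add_one_ne_zero (R := k) a)
  exact (hL_rest.symm.mul_dvd
    ((IsRelPrime.prod_right fun i hi => (hcone_xy i hi).symm).mul_dvd (hxy.mul_dvd hx hy)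
      (Finset.prod_dvd_of_isRelPrime hcone_pairwise hcone)) hL)

end PlaneLines

theorem trace_of_X_lambda_general (k : Type*) [Field k] [CharZero k] (s : ℕ)
    (l : k) :
    let t : MvPolynomial (Fin 4) k := X 0
    let x : MvPolynomial (Fin 4) k := X 1
    let y : MvPolynomial (Fin 4) k := X 2
    let z : MvPolynomial (Fin 4) k := X 3
    let J : Ideal (MvPolynomial (Fin 4) k) :=
      Ideal.span {x, z} ⊓ Ideal.span {y, z} ⊓
        (⨅ i ∈ Finset.Icc 1 (s - 3), Ideal.span {x + i • y, z}) ⊓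
        ((Ideal.span {x, y, z}) ^ (s - 1) + Ideal.span {z ^ 2}) ⊓
        Ideal.span {x - y - C l * t, z} ⊓
        (Ideal.span {x, x - y - C l * t, z}) ^ 2 ⊓
        (Ideal.span {y, x - y - C l * t, z}) ^ 2 ⊓
        (⨅ i ∈ Finset.Icc 1 (s - 3), (Ideal.span {x + i • y, x - y - C l * t, z}) ^ 2)
    J + Ideal.span {z} =
      Ideal.span
          {x * y * (∏ i ∈ Finset.Icc 1 (s - 3), (x + i • y)) * (x - y - C l * t)} +
        Ideal.span {z} := by
  intro t x y z J
  set L := x - y - C l * t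
  set Q := ∏ i ∈ Finset.Icc 1 (s - 3), (x + i • y)
  have hQ : ∀ i ∈ Finset.Icc 1 (s - 3), x + i • y ∣ Q := fun i hi => Finset.dvd_prod_of_mem _ hi
  have hP : x * y * Q * L ∈ J := by
    simp only [J, Ideal.mem_inf, Ideal.mem_iInf]
    refine ⟨⟨⟨⟨⟨⟨⟨?_, ?_⟩, fun i hi => ?_⟩, Ideal.mem_sup_left ?_⟩, ?_⟩, ?_⟩, ?_⟩, fun i hi => ?_⟩
    · exact Ideal.mem_span_pair_of_dvd (((dvd_mul_right x y).mul_right Q).mul_right L)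
    · exact Ideal.mem_span_pair_of_dvd (((dvd_mul_left y x).mul_right Q).mul_right L)
    · exact Ideal.mem_span_pair_of_dvd (((hQ i hi).mul_left _).mul_right _)
    · exact Ideal.pow_le_pow_right (by omega)
        (Ideal.mul_mem_right L _ (mul_mul_prod_mem_span_pow x y z _))
    · exact Ideal.mem_span_pair_of_dvd (dvd_mul_left L _)
    · exact Ideal.mem_sq_span_triple_of_mul_dvd ⟨y * Q, by ring⟩
    · exact Ideal.mem_sq_span_triple_of_mul_dvd ⟨x * Q, by ring⟩
    · exact Ideal.mem_sq_span_triple_of_mul_dvd (mul_dvd_mul ((hQ i hi).mul_left _) dvd_rfl)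
  let φ := (aeval (R := k) (Function.update (X : Fin 4 → MvPolynomial (Fin 4) k) 3 0)).toRingHom
  refine Ideal.add_span_singleton_eq_of_dvd_map φ (sub_aeval_update_X_zero_mem_span 3) hP
    fun f hf => ?_
  simp only [J, Ideal.mem_inf, Ideal.mem_iInf] at hf
  obtain ⟨⟨⟨⟨⟨⟨⟨hx, hy⟩, hcone⟩, -⟩, hL⟩, -⟩, -⟩, -⟩ := hf
  have hz : φ z = 0 := by simp [φ, z]
  refine prod_lines_dvd l _ ?_ ?_ (fun i hi => ?_) ?_
  · simpa [φ, x] using map_dvd_map_of_mem_span_pair φ hz hx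
  · simpa [φ, y] using map_dvd_map_of_mem_span_pair φ hz hy
  · simpa [φ, x, y] using map_dvd_map_of_mem_span_pair φ hz (hcone i hi)
  · simpa [φ, L, x, y, t] using map_dvd_map_of_mem_span_pair φ hz hL

/-- In `k[t,x,y,z]` with `char k = 0`, `s ≥ 3`, `λ ≠ 0`: the trace on the plane `z = 0` of
the scheme `X_λ` (a `(2,s-1)`-cone configuration plus the line `x - y - λt = z = 0` with
double points at its `s-1` intersections with the cone lines) is the union of the `s` lines
`x, y, x+y, …, x+(s-3)y, x-y-λt` in the plane: `J_λ + (z) = (x·y·(x+y)⋯(x+(s-3)y)·(x-y-λt)) + (z)`. -/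
theorem trace_of_X_lambda (k : Type*) [Field k] [CharZero k] (s : ℕ) (hs : 3 ≤ s)
    (l : k) (hl : l ≠ 0) :
    let t : MvPolynomial (Fin 4) k := X 0
    let x : MvPolynomial (Fin 4) k := X 1
    let y : MvPolynomial (Fin 4) k := X 2
    let z : MvPolynomial (Fin 4) k := X 3
    let J : Ideal (MvPolynomial (Fin 4) k) :=
      Ideal.span {x, z} ⊓ Ideal.span {y, z} ⊓
        (⨅ i ∈ Finset.Icc 1 (s - 3), Ideal.span {x + i • y, z}) ⊓
        ((Ideal.span {x, y, z}) ^ (s - 1) + Ideal.span {z ^ 2}) ⊓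
        Ideal.span {x - y - C l * t, z} ⊓
        (Ideal.span {x, x - y - C l * t, z}) ^ 2 ⊓
        (Ideal.span {y, x - y - C l * t, z}) ^ 2 ⊓
        (⨅ i ∈ Finset.Icc 1 (s - 3), (Ideal.span {x + i • y, x - y - C l * t, z}) ^ 2)
    J + Ideal.span {z} =
      Ideal.span
          {x * y * (∏ i ∈ Finset.Icc 1 (s - 3), (x + i • y)) * (x - y - C l * t)} +
        Ideal.span {z} :=
  trace_of_X_lambda_general k s l
end

section
/- Let k be a field of characteristic 0, let s ≥ 3 be an integer, and let λ ∈ k with λ ≠ 0. In k[t, x, y, z], set J_λ = (x, z) ∩ (y, z) ∩ (x + y, z) ∩ (x + 2y, z) ∩ … ∩ (x + (s−3)y, z) ∩ ((x, y, z)^{s−1} + (z^2)) ∩ (x − y − λt, z) ∩ (x, x − y − λt, z)^2 ∩ (y, x − y − λt, z)^2 ∩ (x + y, x − y − λt, z)^2 ∩ … ∩ (x + (s−3)y, x − y − λt, z)^2 (factors with x + iy over i = 1, …, s−3, empty when s = 3). Then the ideal quotient J_λ : (z) equals (x · y · (x + y) ⋯ (x + (s−3)y)) + (x, y)^{s−2}·(x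 − y − λt) + (z), where (x, y)^{s−2}·(x − y − λt) denotes the product of the ideal (x, y)^{s−2} with the principal ideal (x − y − λt). (This computes the residual of the scheme X_λ with respect to the plane z = 0.) -/
/-!
Write `L = x - y - λt` and `f₀ = f(z = 0)`. If `f z ∈ J_λ`, reading off the coefficient of `z`
(as `∂/∂z` at `z = 0`) in the components `(x, y, z)^{s-1} + (z²)` and `(g, L, z)²` gives
`f₀ ∈ (x, y)^{s-2}` and `f₀ ∈ (g, L)` for every cone line `g ∈ {x, y, x + i y}`. The substitution
`t ↦ (x - y)/λ` kills `L` and fixes each `g`, so the pairwise non-associate primes `g` all divide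
the substituted `f₀`, hence so does their product. Since the substitution also fixes `x` and `y`,
it moves `f₀ ∈ (x, y)^{s-2}` only by an element of `L·(x, y)^{s-2}`. The reverse inclusion is a
check on each component of `J_λ`.
-/

open MvPolynomial

namespace MvPolynomial

variable {R σ : Type*}

theorem sub_aeval_mem [CommRing R] {I : Ideal (MvPolynomial σ R)} {g : σ → MvPolynomial σ R}
    (hg : ∀ j, X j - g j ∈ I) (f : MvPolynomial σ R) : f - aeval g f ∈ I := by
  rw [← Ideal.Quotient.eq]
  have : (Ideal.Quotient.mkₐ R I).comp (aeval X) = (Ideal.Quotient.mkₐ R I).comp (aeval g) :=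
    algHom_ext fun j => by simpa [Ideal.Quotient.eq] using hg j
  simpa using congr($this f)

variable [DecidableEq σ]

theorem sub_aeval_update_mem [CommRing R] {I : Ideal (MvPolynomial σ R)} {i : σ}
    {u : MvPolynomial σ R} (h : X i - u ∈ I) (f : MvPolynomial σ R) :
    f - aeval (Function.update X i u) f ∈ I :=
  sub_aeval_mem (fun j => by rcases eq_or_ne j i with rfl | hj <;> simp [*]) f

theorem prime_X_sub [CommRing R] [IsDomain R] {i : σ} {u : MvPolynomial σ R}
    (hu : aeval (Function.update X i u) u = u) (hne : X i - u ≠ 0) : Prime (X i - u) := by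
  have hker : RingHom.ker (aeval (Function.update X i u)) = Ideal.span {X i - u} := by
    refine le_antisymm (fun f hf => ?_) ?_
    · simpa only [RingHom.mem_ker.mp hf, sub_zero] using
        sub_aeval_update_mem (Ideal.mem_span_singleton_self (X i - u)) f
    · rw [Ideal.span_le, Set.singleton_subset_iff, SetLike.mem_coe, RingHom.mem_ker, map_sub,
        aeval_X, Function.update_self, hu, sub_self]
  rw [← Ideal.span_singleton_prime hne, ← hker]
  exact RingHom.ker_isPrime _

theorem prime_X_add_smul_X [CommRing R] [IsDomain R] {i j : σ} (hij : i ≠ j) (c : R) :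
    Prime (X i + c • X j : MvPolynomial σ R) := by
  rw [← sub_neg_eq_add]
  refine prime_X_sub (by simp [hij.symm]) fun h => ?_
  simpa [hij.symm] using congr(eval (Pi.single i 1) $h)

theorem not_X_add_smul_X_dvd [CommRing R] [Nontrivial R] {i j : σ} (hij : i ≠ j) {c d : R}
    (hcd : c ≠ d) :
    ¬(X i + c • X j : MvPolynomial σ R) ∣ X i + d • X j := fun h => hcd <| by
  simpa [hij.symm, neg_add_eq_zero] using
    map_dvd (eval (Function.update (Pi.single j 1) i (-c))) h

theorem not_X_dvd_X_add_smul_X [CommRing R] [Nontrivial R] {i j : σ} (hij : i ≠ j) (c : R) :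
    ¬(X j : MvPolynomial σ R) ∣ X i + c • X j := fun h => by
  simpa [hij] using map_dvd (eval (Pi.single i 1)) h

end MvPolynomial

section PrimeProduct

variable {M : Type*} [CommMonoidWithZero M]

theorem Prime.mul_dvd_of_not_dvd {p a n : M} (hp : Prime p) (hpa : ¬p ∣ a) (ha : a ∣ n)
    (hpn : p ∣ n) : p * a ∣ n := by
  obtain ⟨b, rfl⟩ := ha
  obtain ⟨c, rfl⟩ := (hp.dvd_or_dvd hpn).resolve_left hpa
  exact ⟨c, by ac_rfl⟩

theorem Finset.prod_dvd_of_prime {ι : Type*} {s : Finset ι} {p : ι → M} {n : M}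
    (hp : ∀ i ∈ s, Prime (p i)) (hs : (s : Set ι).Pairwise fun i j => ¬p i ∣ p j)
    (hn : ∀ i ∈ s, p i ∣ n) : ∏ i ∈ s, p i ∣ n := by
  classical
  induction s using Finset.induction_on with
  | empty => simp
  | insert a s ha ih =>
    rw [Finset.prod_insert ha]
    simp only [Finset.mem_insert, forall_eq_or_imp] at hp hn
    refine hp.1.mul_dvd_of_not_dvd (fun hdvd => ?_) (ih hp.2 (hs.mono (by simp)) hn.2) hn.1
    obtain ⟨j, hj, hdvd⟩ := hp.1.exists_mem_finset_dvd hdvd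
    exact hs (by simp) (by simp [hj]) (ne_of_mem_of_not_mem hj ha).symm hdvd

end PrimeProduct

namespace MvPolynomial

section Jet

variable {R σ : Type*} [CommSemiring R] [DecidableEq σ] (i : σ)

noncomputable def substZero : MvPolynomial σ R →ₐ[R] MvPolynomial σ R :=
  aeval (Function.update X i 0)

@[simp]
theorem substZero_X_of_ne {j : σ} (h : j ≠ i) : substZero i (X j : MvPolynomial σ R) = X j := by
  simp [substZero, h]

@[simp]
theorem substZero_X_self : substZero i (X i : MvPolynomial σ R) = 0 := by simp [substZero]

/-- The polynomials whose coefficients of `X i ^ 0` and `X i ^ 1` lie in `A` and `B`. -/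
def jetIdeal (A B : Ideal (MvPolynomial σ R)) (hAB : A ≤ B) : Ideal (MvPolynomial σ R) where
  carrier := {h | substZero i h ∈ A ∧ substZero i (pderiv i h) ∈ B}
  add_mem' ha hb := ⟨by simpa using add_mem ha.1 hb.1, by simpa using add_mem ha.2 hb.2⟩
  zero_mem' := ⟨by simp, by simp⟩
  smul_mem' c h hh := by
    refine ⟨by simpa using A.mul_mem_left (substZero i c) hh.1, ?_⟩
    rw [smul_eq_mul, pderiv_mul, map_add, map_mul, map_mul]
    exact add_mem (B.mul_mem_left _ (hAB hh.1)) (B.mul_mem_left _ hh.2)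

variable {i}

theorem jetIdeal_mono {A A' B B' : Ideal (MvPolynomial σ R)} {hAB : A ≤ B} {hAB' : A' ≤ B'}
    (hA : A ≤ A') (hB : B ≤ B') : jetIdeal i A B hAB ≤ jetIdeal i A' B' hAB' :=
  fun _ h => ⟨hA h.1, hB h.2⟩

theorem mul_le_jetIdeal {I J A B A' B' : Ideal (MvPolynomial σ R)} {hAB : A ≤ B} {hAB' : A' ≤ B'}
    (hI : I ≤ jetIdeal i A B hAB) (hJ : J ≤ jetIdeal i A' B' hAB') :
    I * J ≤ jetIdeal i (A * A') (A * B' ⊔ B * A')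
      (Ideal.mul_mono_right hAB' |>.trans le_sup_left) := by
  refine Ideal.mul_le.mpr fun f hf g hg => ⟨?_, ?_⟩
  · simpa using Ideal.mul_mem_mul (hI hf).1 (hJ hg).1
  · rw [pderiv_mul, map_add, map_mul, map_mul, add_comm]
    exact add_mem (Ideal.mem_sup_left (Ideal.mul_mem_mul (hI hf).1 (hJ hg).2))
      (Ideal.mem_sup_right (Ideal.mul_mem_mul (hI hf).2 (hJ hg).1))

theorem sup_span_X_le_jetIdeal {I : Ideal (MvPolynomial σ R)} (hI : I ≤ I.comap (substZero i)) :
    I ⊔ Ideal.span {X i} ≤ jetIdeal i I ⊤ le_top :=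
  sup_le (fun _ hf => ⟨hI hf, trivial⟩) <|
    Ideal.span_le.mpr <| Set.singleton_subset_iff.mpr ⟨by simp, trivial⟩

theorem pow_sup_span_X_le_jetIdeal {I : Ideal (MvPolynomial σ R)}
    (hI : I ≤ I.comap (substZero i)) (n : ℕ) :
    (I ⊔ Ideal.span {X i}) ^ (n + 1) ≤
      jetIdeal i (I ^ (n + 1)) (I ^ n) (Ideal.pow_le_pow_right n.le_succ) := by
  induction n with
  | zero => simpa using sup_span_X_le_jetIdeal hI
  | succ n ih =>
    rw [pow_succ]
    refine (mul_le_jetIdeal ih (sup_span_X_le_jetIdeal hI)).trans (jetIdeal_mono ?_ ?_)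
    · exact (pow_succ I (n + 1)).ge
    · exact sup_le Ideal.mul_le_left (pow_succ I n).ge

theorem span_X_sq_le_jetIdeal {A B : Ideal (MvPolynomial σ R)} (hAB : A ≤ B) :
    Ideal.span {X i ^ 2} ≤ jetIdeal i A B hAB := by
  rw [Ideal.span_le, Set.singleton_subset_iff]
  constructor <;> simp

theorem substZero_mem_pow_of_mul_X_mem {S : Set (MvPolynomial σ R)}
    (hS : ∀ g ∈ S, substZero i g = g) {n : ℕ} {f : MvPolynomial σ R}
    (hf : f * X i ∈ (Ideal.span S ⊔ Ideal.span {X i}) ^ (n + 1) ⊔ Ideal.span {X i ^ 2}) :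
    substZero i f ∈ Ideal.span S ^ n := by
  have hI : Ideal.span S ≤ (Ideal.span S).comap (substZero i) :=
    Ideal.span_le.mpr fun g hg => by simpa [hS g hg] using Ideal.subset_span hg
  simpa [pderiv_mul] using
    (sup_le (pow_sup_span_X_le_jetIdeal hI n) (span_X_sq_le_jetIdeal _) hf).2

end Jet

end MvPolynomial

section FixedPoints

variable {A F : Type*} [CommRing A] [FunLike F A A] [RingHomClass F A A] {ψ : F} {K : Ideal A}

theorem sub_map_mem_mul_span {S : Set A} (hψ : ∀ a, a - ψ a ∈ K) (hS : ∀ g ∈ S, ψ g = g)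
    {f : A} (hf : f ∈ Ideal.span S) : f - ψ f ∈ K * Ideal.span S := by
  induction hf using Submodule.span_induction with
  | mem g hg => simp [hS g hg]
  | zero => simp
  | add f g _ _ hf hg => simpa [add_sub_add_comm] using add_mem hf hg
  | smul a f hf ihf =>
    rw [smul_eq_mul, map_mul, show a * f - ψ a * ψ f = (a - ψ a) * f + ψ a * (f - ψ f) by ring]
    exact add_mem (Ideal.mul_mem_mul (hψ a) hf) (Ideal.mul_mem_left _ _ ihf)

theorem sub_map_mem_mul_span_pow {S : Set A} (hψ : ∀ a, a - ψ a ∈ K) (hS : ∀ g ∈ S, ψ g = g)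
    (n : ℕ) {f : A} (hf : f ∈ Ideal.span S ^ n) : f - ψ f ∈ K * Ideal.span S ^ n := by
  induction n generalizing f with
  | zero => simpa using hψ f
  | succ n ih =>
    rw [pow_succ] at hf ⊢
    refine Submodule.mul_induction_on hf (fun f hf g hg => ?_) fun f g hf hg => ?_
    · have hψf : ψ f ∈ Ideal.span S ^ n := by
        simpa using sub_mem hf (Ideal.mul_le_right (ih hf))
      rw [map_mul, show f * g - ψ f * ψ g = (f - ψ f) * g + ψ f * (g - ψ g) by ring, ← mul_assoc]
      refine add_mem (Ideal.mul_mem_mul (ih hf) hg) ?_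
      have := Ideal.mul_mem_mul hψf (sub_map_mem_mul_span hψ hS hg)
      rwa [← mul_assoc, mul_comm _ K] at this
    · simpa [add_sub_add_comm] using add_mem hf hg

end FixedPoints

noncomputable section

namespace XLambda

variable {k : Type*} [Field k]

def line (l : k) : MvPolynomial (Fin 4) k := X 1 - X 2 - C l * X 0

def coneProduct (s : ℕ) : MvPolynomial (Fin 4) k :=
  X 1 * X 2 * ∏ i ∈ Finset.Icc 1 (s - 3), (X 1 + i • X 2)

def ideal (s : ℕ) (l : k) : Ideal (MvPolynomial (Fin 4) k) :=
  Ideal.span {X 1, X 3} ⊓ Ideal.span {X 2, X 3} ⊓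
    (⨅ i ∈ Finset.Icc 1 (s - 3), Ideal.span {X 1 + i • X 2, X 3}) ⊓
    (Ideal.span {X 1, X 2, X 3} ^ (s - 1) + Ideal.span {X 3 ^ 2}) ⊓
    Ideal.span {line l, X 3} ⊓
    Ideal.span {X 1, line l, X 3} ^ 2 ⊓
    Ideal.span {X 2, line l, X 3} ^ 2 ⊓
    (⨅ i ∈ Finset.Icc 1 (s - 3), Ideal.span {X 1 + i • X 2, line l, X 3} ^ 2)

def residual (s : ℕ) (l : k) : Ideal (MvPolynomial (Fin 4) k) :=
  Ideal.span {coneProduct s} + Ideal.span {X 1, X 2} ^ (s - 2) * Ideal.span {line l} +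
    Ideal.span {X 3}

def substLine (l : k) : MvPolynomial (Fin 4) k →ₐ[k] MvPolynomial (Fin 4) k :=
  aeval (Function.update X 0 (C l⁻¹ * (X 1 - X 2)))

theorem substLine_line {l : k} (hl : l ≠ 0) : substLine l (line l) = 0 := by
  simp [substLine, line, ← mul_assoc, ← C_mul, hl]

theorem sub_substLine_mem {l : k} (hl : l ≠ 0) (f : MvPolynomial (Fin 4) k) :
    f - substLine l f ∈ Ideal.span {line l} := by
  refine sub_aeval_update_mem (Ideal.mem_span_singleton'.mpr ⟨-C l⁻¹, ?_⟩) f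
  have : (C l⁻¹ * C l : MvPolynomial (Fin 4) k) = 1 := by rw [← C_mul, inv_mul_cancel₀ hl, C_1]
  rw [line]
  linear_combination (X 0 : MvPolynomial (Fin 4) k) * this

theorem coneProduct_dvd [CharZero k] {s : ℕ} {n : MvPolynomial (Fin 4) k} (hx : X 1 ∣ n)
    (hy : X 2 ∣ n) (hforms : ∀ i ∈ Finset.Icc 1 (s - 3), X 1 + i • X 2 ∣ n) :
    coneProduct s ∣ n := by
  have h0 : 0 ∉ Finset.Icc 1 (s - 3) := by simp
  have hforms' : ∏ i ∈ insert 0 (Finset.Icc 1 (s - 3)), (X 1 + i • X 2) ∣ n := by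
    refine Finset.prod_dvd_of_prime (fun i _ => ?_) (fun i _ j _ hij => ?_)
      (by simpa [hx] using hforms) <;> simp only [← Nat.cast_smul_eq_nsmul k]
    · exact prime_X_add_smul_X (by decide) _
    · exact not_X_add_smul_X_dvd (by decide) (Nat.cast_injective.ne hij)
  have hy' : ¬(X 2 : MvPolynomial (Fin 4) k) ∣
      ∏ i ∈ insert 0 (Finset.Icc 1 (s - 3)), (X 1 + i • X 2) := fun h => by
    obtain ⟨i, -, hi⟩ := X_prime.exists_mem_finset_dvd h
    rw [← Nat.cast_smul_eq_nsmul k] at hi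
    exact not_X_dvd_X_add_smul_X (by decide) _ hi
  have := X_prime.mul_dvd_of_not_dvd hy' hforms' hy
  rw [Finset.prod_insert h0, zero_smul, add_zero] at this
  rw [coneProduct]
  convert this using 1
  ring

theorem coneProduct_mem_pow (s : ℕ) :
    coneProduct s ∈ Ideal.span {(X 1 : MvPolynomial (Fin 4) k), X 2} ^ (s - 2) := by
  have hx : (X 1 : MvPolynomial (Fin 4) k) ∈ Ideal.span {X 1, X 2} := Ideal.subset_span (by simp)
  have hy : (X 2 : MvPolynomial (Fin 4) k) ∈ Ideal.span {X 1, X 2} := Ideal.subset_span (by simp)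
  have hprod := Ideal.prod_mem_prod (s := Finset.Icc 1 (s - 3))
    (fun i _ => add_mem hx (Submodule.smul_of_tower_mem _ i hy))
  rw [Finset.prod_const, Nat.card_Icc, add_tsub_cancel_right] at hprod
  refine Ideal.pow_le_pow_right (by omega : s - 2 ≤ s - 3 + 1) ?_
  rw [coneProduct, mul_assoc, pow_succ']
  exact Ideal.mul_mem_left _ _ (Ideal.mul_mem_mul hy hprod)

theorem mem_residual_of_mul_X_three_mem [CharZero k] {s : ℕ} (hs : 3 ≤ s) {l : k} (hl : l ≠ 0)
    {f : MvPolynomial (Fin 4) k}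
    (hcone : f * X 3 ∈ Ideal.span {X 1, X 2, X 3} ^ (s - 1) + Ideal.span {X 3 ^ 2})
    (hx : f * X 3 ∈ Ideal.span {X 1, line l, X 3} ^ 2)
    (hy : f * X 3 ∈ Ideal.span {X 2, line l, X 3} ^ 2)
    (hforms : ∀ i ∈ Finset.Icc 1 (s - 3),
      f * X 3 ∈ Ideal.span {X 1 + i • X 2, line l, X 3} ^ 2) :
    f ∈ residual s l := by
  have hsplit (a b c : MvPolynomial (Fin 4) k) :
      Ideal.span {a, b, c} = Ideal.span {a, b} ⊔ Ideal.span {c} := by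
    simp only [Ideal.span_insert, sup_assoc]
  set f₀ := substZero 3 f
  have hcone₀ : f₀ ∈ Ideal.span {X 1, X 2} ^ (s - 2) := by
    refine substZero_mem_pow_of_mul_X_mem (by simp) ?_
    rwa [← hsplit, show s - 2 + 1 = s - 1 by omega]
  have hdvd (g : MvPolynomial (Fin 4) k) (hg₀ : substZero 3 g = g) (hg : substLine l g = g)
      (hfg : f * X 3 ∈ Ideal.span {g, line l, X 3} ^ 2) : g ∣ substLine l f₀ := by
    have : f₀ ∈ Ideal.span {g, line l} := by
      simpa using substZero_mem_pow_of_mul_X_mem (n := 1) (by simp [hg₀, line])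
        (by rw [← hsplit]; exact Ideal.mem_sup_left hfg)
    obtain ⟨a, b, hab⟩ := Ideal.mem_span_pair.mp this
    exact ⟨substLine l a, by simp [← hab, hg, substLine_line hl, mul_comm]⟩
  obtain ⟨h, hh⟩ : coneProduct s ∣ substLine l f₀ :=
    coneProduct_dvd (hdvd _ (by simp) (by simp [substLine]) hx)
      (hdvd _ (by simp) (by simp [substLine]) hy)
      fun i hi => hdvd _ (by simp) (by simp [substLine]) (hforms i hi)
  have hline : f₀ - substLine l f₀ ∈ Ideal.span {line l} * Ideal.span {X 1, X 2} ^ (s - 2) :=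
    sub_map_mem_mul_span_pow (sub_substLine_mem hl) (by simp [substLine]) (s - 2) hcone₀
  rw [show f = coneProduct s * h + (f₀ - substLine l f₀) + (f - f₀) by rw [← hh]; ring]
  refine add_mem (add_mem ?_ ?_) (Ideal.mem_sup_right (sub_aeval_update_mem (by simp) f))
  · exact Ideal.mem_sup_left
      (Ideal.mem_sup_left (Ideal.mem_span_singleton'.mpr ⟨h, mul_comm _ _⟩))
  · exact Ideal.mem_sup_left (Ideal.mem_sup_right (mul_comm (Ideal.span {line l}) _ ▸ hline))

theorem residual_mul_span_X_three_le (s : ℕ) (l : k) :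
    residual s l * Ideal.span {X 3} ≤ ideal s l := by
  have hz (g : MvPolynomial (Fin 4) k) : residual s l * Ideal.span {X 3} ≤ Ideal.span {g, X 3} :=
    Ideal.mul_le_right.trans (Ideal.span_mono (by simp))
  have hsq (g : MvPolynomial (Fin 4) k) (hg : g ∣ coneProduct s) :
      residual s l * Ideal.span {X 3} ≤ Ideal.span {g, line l, X 3} ^ 2 := by
    have hle {a : MvPolynomial (Fin 4) k} (ha : a ∈ ({g, line l, X 3} : Set _)) :
        Ideal.span {a} ≤ Ideal.span {g, line l, X 3} :=
      Ideal.span_mono (Set.singleton_subset_iff.mpr ha)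
    rw [sq]
    refine Ideal.mul_mono (sup_le (sup_le ?_ ?_) (hle (by simp))) (hle (by simp))
    · exact (Ideal.span_singleton_le_span_singleton.mpr hg).trans (hle (by simp))
    · exact Ideal.mul_le_right.trans (hle (by simp))
  have hcone : residual s l * Ideal.span {X 3} ≤
      Ideal.span {X 1, X 2, X 3} ^ (s - 1) + Ideal.span {X 3 ^ 2} := by
    have : residual s l ≤ Ideal.span {X 1, X 2} ^ (s - 2) ⊔ Ideal.span {X 3} :=
      sup_le_sup_right (sup_le (Ideal.span_le.mpr (by simpa using coneProduct_mem_pow s))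
        Ideal.mul_le_left) _
    refine (Ideal.mul_mono_left this).trans ?_
    rw [Ideal.sup_mul, Ideal.span_singleton_mul_span_singleton, ← sq]
    refine sup_le_sup_right ?_ _
    calc Ideal.span {X 1, X 2} ^ (s - 2) * Ideal.span {(X 3 : MvPolynomial (Fin 4) k)}
        ≤ Ideal.span {X 1, X 2, X 3} ^ (s - 2) * Ideal.span {X 1, X 2, X 3} :=
          Ideal.mul_mono (Ideal.pow_right_mono (Ideal.span_mono (by simp)) _)
            (Ideal.span_mono (by simp))
      _ ≤ Ideal.span {X 1, X 2, X 3} ^ (s - 1) := by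
          rw [← pow_succ]; exact Ideal.pow_le_pow_right (by omega)
  unfold ideal
  refine le_inf (le_inf (le_inf (le_inf (le_inf (le_inf (le_inf (hz _) (hz _))
    (le_iInf₂ fun _ _ => hz _)) hcone) (hz _)) (hsq _ ?_)) (hsq _ ?_))
    (le_iInf₂ fun i hi => hsq _ ?_)
  · exact dvd_mul_of_dvd_left (dvd_mul_right _ _) _
  · exact dvd_mul_of_dvd_left (dvd_mul_left _ _) _
  · exact dvd_mul_of_dvd_right (Finset.dvd_prod_of_mem _ hi) _

theorem colon_span_X_three_le [CharZero k] {s : ℕ} (hs : 3 ≤ s) {l : k} (hl : l ≠ 0) :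
    (ideal s l).colon (Ideal.span {(X 3 : MvPolynomial (Fin 4) k)}) ≤ residual s l := by
  intro f hf
  simp only [Ideal.mem_colon_span_singleton, ideal, Submodule.mem_inf, Submodule.mem_iInf] at hf
  obtain ⟨⟨⟨⟨⟨⟨⟨-, -⟩, -⟩, hcone⟩, -⟩, hx⟩, hy⟩, hforms⟩ := hf
  exact mem_residual_of_mul_X_three_mem hs hl hcone hx hy hforms

theorem le_colon_span_X_three (s : ℕ) (l : k) :
    residual s l ≤ (ideal s l).colon (Ideal.span {(X 3 : MvPolynomial (Fin 4) k)}) := fun _ hf =>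
  Ideal.mem_colon_span_singleton.mpr
    (residual_mul_span_X_three_le s l (Ideal.mul_mem_mul hf (Ideal.mem_span_singleton_self _)))

end XLambda

end

/-- In `k[t,x,y,z]` with `char k = 0`, `s ≥ 3`, `λ ≠ 0`: the residual with respect to the
plane `z = 0` of the scheme `X_λ` (a `(2,s-1)`-cone configuration plus the line
`x - y - λt = z = 0` with double points at its `s-1` intersections with the cone lines) is
given by `J_λ : (z) = (x·y·(x+y)⋯(x+(s-3)y)) + (x,y)^{s-2}·(x-y-λt) + (z)`. -/
theorem residual_of_X_lambda (k : Type*) [Field k] [CharZero k] (s : ℕ) (hs : 3 ≤ s)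
    (l : k) (hl : l ≠ 0) :
    let t : MvPolynomial (Fin 4) k := X 0
    let x : MvPolynomial (Fin 4) k := X 1
    let y : MvPolynomial (Fin 4) k := X 2
    let z : MvPolynomial (Fin 4) k := X 3
    let J : Ideal (MvPolynomial (Fin 4) k) :=
      Ideal.span {x, z} ⊓ Ideal.span {y, z} ⊓
        (⨅ i ∈ Finset.Icc 1 (s - 3), Ideal.span {x + i • y, z}) ⊓
        ((Ideal.span {x, y, z}) ^ (s - 1) + Ideal.span {z ^ 2}) ⊓
        Ideal.span {x - y - C l * t, z} ⊓
        (Ideal.span {x, x - y - C l * t, z}) ^ 2 ⊓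
        (Ideal.span {y, x - y - C l * t, z}) ^ 2 ⊓
        (⨅ i ∈ Finset.Icc 1 (s - 3), (Ideal.span {x + i • y, x - y - C l * t, z}) ^ 2)
    Submodule.colon J (Ideal.span {z}) =
      Ideal.span {x * y * ∏ i ∈ Finset.Icc 1 (s - 3), (x + i • y)} +
        (Ideal.span {x, y}) ^ (s - 2) * Ideal.span {x - y - C l * t} +
        Ideal.span {z} := by
  intro t x y z J
  exact le_antisymm (XLambda.colon_span_X_three_le hs hl) (XLambda.le_colon_span_X_three s l)
end
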